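/- Let n be a nonnegative integer and let a, c be complex numbers with (a−n)_{2n} ≠ 0, (1−a)_n ≠ 0, and (1+2c−a)_{2n} ≠ 0. Then _3F_2(−n, a, c ; (a−n)/2, (1+a−n)/2 ; 1/4) = [(1+2c−a)_n / (1−a)_n] · _3F_2(−n, 1+2c−a+n, c ; (1+2c−a)/2, (2+2c−a)/2 ; 1/4), both sides being finite sums over k from 0 to n. -/

import Mathlib

/-!
Writing `(a - n)_{2k} = 4^k ((a - n)/2)_k ((a - n + 1)/2)_k` and
`(1 - a)_n (a)_k = (-1)^n (a - n)_{2k} (a - n + 2k)_{n-k}`, the left-hand series times `(1 - a)_n`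
becomes `(-1)^n S_n(c, y)` with `y = a - n - c`, where
`S_n(c, y) = ∑ₖ (-1)^k C(n,k) (c)_k (c + 2k + y)_{n-k}` (`twistedPochSum`); in the same way
`(1 + 2c - a)_n` times the right-hand series is `S_n(c, 1 - n - y)`. Expanding each
`(c + 2k + y)_{n-k}` by Vandermonde and collecting by `(c)_i` gives
`S_n(c, y) = ∑ᵢ (-1)^i C(n,i) (n - i)(n - i - 1)⋯(n - 2i + 1) (c)_i (y + i)_{n-2i}`,
and the reflection `(x)_N = (-1)^N (1 - x - N)_N` shows that every summand is multiplied by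
`(-1)^n` under `y ↦ 1 - n - y`.
-/

open Finset

/-- The rising factorial (Pochhammer symbol) `(a)_k = a(a+1)⋯(a+k-1)`. -/
noncomputable def poch (a : ℂ) (k : ℕ) : ℂ := ∏ i ∈ Finset.range k, (a + i)

theorem poch_zero (a : ℂ) : poch a 0 = 1 := prod_range_zero _

theorem poch_succ (a : ℂ) (k : ℕ) : poch a (k + 1) = poch a k * (a + k) :=
  prod_range_succ _ _

theorem poch_add (a : ℂ) (m n : ℕ) : poch a (m + n) = poch a m * poch (a + m) n := by
  induction n with
  | zero => simp [poch_zero]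
  | succ n ih =>
    rw [← add_assoc, poch_succ, ih, poch_succ, mul_assoc]
    push_cast
    ring_nf

theorem poch_succ_eq_mul (a : ℂ) (k : ℕ) : poch a (k + 1) = a * poch (a + 1) k := by
  rw [add_comm, poch_add, poch_succ, poch_zero]
  simp

theorem poch_ne_zero_of_le {a : ℂ} {m n : ℕ} (h : m ≤ n) (hn : poch a n ≠ 0) : poch a m ≠ 0 := by
  obtain ⟨d, rfl⟩ := Nat.exists_eq_add_of_le h
  rw [poch_add] at hn
  exact left_ne_zero_of_mul hn

theorem poch_eq_neg_one_pow_mul (a : ℂ) (n : ℕ) : poch a n = (-1) ^ n * poch (1 - a - n) n := by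
  induction n generalizing a with
  | zero => simp [poch_zero]
  | succ n ih =>
    rw [poch_succ, ih, poch_succ_eq_mul, pow_succ]
    push_cast
    ring_nf

theorem poch_two_mul (a : ℂ) (k : ℕ) :
    poch a (2 * k) = 4 ^ k * poch (a / 2) k * poch ((a + 1) / 2) k := by
  induction k with
  | zero => simp [poch_zero]
  | succ k ih =>
    rw [mul_add_one, poch_succ, poch_succ, ih, poch_succ, poch_succ]
    push_cast
    ring

theorem poch_neg_natCast {n k : ℕ} (h : k ≤ n) :
    poch (-(n : ℂ)) k = (-1) ^ k * n.descFactorial k := by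
  have hsign : (-1 : ℂ) ^ k = ∏ _i ∈ range k, (-1) := by simp
  rw [Nat.descFactorial_eq_prod_range, Nat.cast_prod, poch, hsign, ← prod_mul_distrib]
  refine prod_congr rfl fun i hi => ?_
  rw [Nat.cast_sub (by rw [mem_range] at hi; omega)]
  ring

theorem poch_add_eq_sum (u v : ℂ) (m : ℕ) :
    poch (u + v) m = ∑ j ∈ range (m + 1), (m.choose j : ℂ) * poch u j * poch v (m - j) := by
  induction m with
  | zero => simp [poch_zero]
  | succ m ih =>
    simp_rw [mul_assoc]
    rw [sum_choose_succ_mul (fun i j => poch u i * poch v j), ← sum_add_distrib, poch_succ, ih,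
      sum_mul]
    refine sum_congr rfl fun j hj => ?_
    rw [Nat.succ_sub (mem_range_succ_iff.mp hj), poch_succ, poch_succ,
      Nat.cast_sub (mem_range_succ_iff.mp hj)]
    ring

theorem poch_add_one_sub_poch (x : ℂ) (s : ℕ) :
    poch (x + 1) s - poch x s = s * poch (x + 1) (s - 1) := by
  cases s with
  | zero => simp [poch_zero]
  | succ s =>
    rw [poch_succ, poch_succ_eq_mul, Nat.add_sub_cancel]
    push_cast
    ring

theorem fwdDiff_iter_poch (r i : ℕ) (y : ℂ) :
    (fwdDiff 1)^[i] (fun x => poch x r) y = r.descFactorial i * poch (y + i) (r - i) := by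
  induction i generalizing y with
  | zero => simp
  | succ i ih =>
    rw [Function.iterate_succ_apply', fwdDiff, ih, ih, ← mul_sub, add_right_comm,
      poch_add_one_sub_poch, Nat.descFactorial_succ, Nat.sub_sub]
    push_cast
    rw [← add_assoc]
    ring

theorem neg_one_pow_mul_neg_one_pow_sub {i k : ℕ} (h : k ≤ i) :
    (-1 : ℂ) ^ i * (-1) ^ (i - k) = (-1) ^ k := by
  rw [← pow_add, show i + (i - k) = k + 2 * (i - k) by omega, pow_add, pow_mul]
  norm_num

theorem sum_neg_one_pow_choose_mul_poch (i r : ℕ) (y : ℂ) :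
    ∑ k ∈ range (i + 1), (-1) ^ k * (i.choose k : ℂ) * poch (y + k) r
      = (-1) ^ i * r.descFactorial i * poch (y + i) (r - i) := by
  have h := fwdDiff_iter_eq_sum_shift (1 : ℂ) (fun x => poch x r) i y
  rw [fwdDiff_iter_poch] at h
  rw [mul_assoc, h, mul_sum]
  refine sum_congr rfl fun k hk => ?_
  rw [zsmul_eq_mul, nsmul_one]
  push_cast
  linear_combination -((i.choose k : ℂ) * poch (y + k) r) *
    neg_one_pow_mul_neg_one_pow_sub (mem_range_succ_iff.mp hk)

noncomputable def twistedPochSum (n : ℕ) (c y : ℂ) : ℂ :=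
  ∑ k ∈ range (n + 1), (-1) ^ k * (n.choose k : ℂ) * poch c k * poch (c + 2 * k + y) (n - k)

/-- The coefficient of `(c)ᵢ` is an `i`-th finite difference of a polynomial of degree `m - i`,
so it vanishes unless `2 i ≤ m`. -/
theorem twistedPochSum_eq_sum (m : ℕ) (c y : ℂ) :
    twistedPochSum m c y = ∑ i ∈ range (m + 1), (-1) ^ i * (m.choose i : ℂ) *
      (m - i).descFactorial i * poch c i * poch (y + i) (m - i - i) := by
  calc twistedPochSum m c y
      = ∑ k ∈ range (m + 1), ∑ j ∈ range (m + 1 - k), (-1) ^ k * (m.choose k : ℂ) *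
          ((m - k).choose j : ℂ) * poch c (k + j) * poch (y + k) (m - k - j) := by
        refine sum_congr rfl fun k hk => ?_
        rw [show c + 2 * k + y = (c + k) + (y + k) by ring, poch_add_eq_sum, mul_sum,
          Nat.sub_add_comm (mem_range_succ_iff.mp hk)]
        refine sum_congr rfl fun j _ => ?_
        rw [poch_add]
        ring
    _ = ∑ i ∈ range (m + 1), ∑ k ∈ range (i + 1), (-1) ^ k * (m.choose k : ℂ) *
          ((m - k).choose (i - k) : ℂ) * poch c (k + (i - k)) * poch (y + k) (m - k - (i - k)) :=
        (sum_range_diag_flip (m + 1) _).symm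
    _ = ∑ i ∈ range (m + 1), (m.choose i : ℂ) * poch c i *
          ∑ k ∈ range (i + 1), (-1) ^ k * (i.choose k : ℂ) * poch (y + k) (m - i) := by
        refine sum_congr rfl fun i hi => ?_
        rw [mul_sum]
        refine sum_congr rfl fun k hk => ?_
        have hki : k ≤ i := mem_range_succ_iff.mp hk
        have hchoose : (m.choose k : ℂ) * ((m - k).choose (i - k) : ℂ)
            = m.choose i * i.choose k := by
          exact_mod_cast (Nat.choose_mul hki).symm
        rw [Nat.add_sub_cancel' hki, Nat.sub_sub, Nat.add_sub_cancel' hki]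
        linear_combination (-1) ^ k * poch c i * poch (y + k) (m - i) * hchoose
    _ = _ := by
        refine sum_congr rfl fun i _ => ?_
        rw [sum_neg_one_pow_choose_mul_poch]
        ring

theorem twistedPochSum_one_sub (m : ℕ) (c y : ℂ) :
    twistedPochSum m c (1 - m - y) = (-1) ^ m * twistedPochSum m c y := by
  rw [twistedPochSum_eq_sum, twistedPochSum_eq_sum, mul_sum]
  refine sum_congr rfl fun i _ => ?_
  by_cases hi : i ≤ m - i
  · have hsign : (-1 : ℂ) ^ m = (-1) ^ (m - i - i) := by
      nth_rw 1 [show m = (m - i - i) + 2 * i by omega]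
      rw [pow_add, pow_mul]
      norm_num
    have harg : 1 - (1 - m - y + i) - ((m - i - i : ℕ) : ℂ) = y + i := by
      rw [Nat.cast_sub hi, Nat.cast_sub (by omega : i ≤ m)]
      ring
    rw [poch_eq_neg_one_pow_mul (1 - m - y + i), harg, hsign]
    ring
  · rw [(Nat.descFactorial_eq_zero_iff_lt).mpr (by omega)]
    simp

theorem poch_one_sub_mul_sum (n : ℕ) (a c : ℂ) (h : poch (a - n) (2 * n) ≠ 0) :
    poch (1 - a) n * ∑ k ∈ range (n + 1),
      (poch (-(n : ℂ)) k * poch a k * poch c k) /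
        ((Nat.factorial k : ℂ) * poch ((a - (n : ℂ)) / 2) k *
          poch ((1 + a - (n : ℂ)) / 2) k) * (1 / 4 : ℂ) ^ k
    = (-1) ^ n * twistedPochSum n c (a - n - c) := by
  rw [twistedPochSum, mul_sum, mul_sum]
  refine sum_congr rfl fun k hk => ?_
  have hkn : k ≤ n := mem_range_succ_iff.mp hk
  have hdup : poch (a - n) (2 * k) = 4 ^ k * poch ((a - n) / 2) k * poch ((1 + a - n) / 2) k := by
    rw [poch_two_mul, add_comm (a - n) 1, add_sub_assoc]
  have hrefl : poch (1 - a) n = (-1) ^ n * poch (a - n) n := by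
    rw [poch_eq_neg_one_pow_mul (1 - a), show 1 - (1 - a) - n = a - n by ring]
  have hsplit : poch (a - n) n * poch a k
      = poch (a - n) (2 * k) * poch (c + 2 * k + (a - n - c)) (n - k) := by
    rw [show poch (a - n) n * poch a k = poch (a - n) (n + k) by rw [poch_add, sub_add_cancel],
      show n + k = 2 * k + (n - k) by omega, poch_add]
    push_cast
    ring_nf
  obtain ⟨hden₁, hden₂⟩ : poch ((a - n) / 2) k ≠ 0 ∧ poch ((1 + a - n) / 2) k ≠ 0 := by
    have := poch_ne_zero_of_le (by omega : 2 * k ≤ 2 * n) h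
    rw [hdup, mul_assoc] at this
    exact mul_ne_zero_iff.mp (right_ne_zero_of_mul this)
  have hfac : (k.factorial : ℂ) ≠ 0 := Nat.cast_ne_zero.mpr k.factorial_ne_zero
  rw [poch_neg_natCast hkn, Nat.descFactorial_eq_factorial_mul_choose, hrefl]
  push_cast
  rw [one_div, inv_pow]
  field_simp
  linear_combination (n.choose k * poch c k) * hsplit
    + (n.choose k * poch c k * poch (c + 2 * k + (a - n - c)) (n - k)) * hdup

theorem stmt_16 (n : ℕ) (a c : ℂ)
    (han : poch (a - (n : ℂ)) (2 * n) ≠ 0) (h1a : poch (1 - a) n ≠ 0)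
    (hca : poch (1 + 2 * c - a) (2 * n) ≠ 0) :
    ∑ k ∈ range (n + 1),
      (poch (-(n : ℂ)) k * poch a k * poch c k) /
        ((Nat.factorial k : ℂ) * poch ((a - (n : ℂ)) / 2) k *
          poch ((1 + a - (n : ℂ)) / 2) k) * (1 / 4 : ℂ) ^ k
    = poch (1 + 2 * c - a) n / poch (1 - a) n *
      ∑ k ∈ range (n + 1),
        (poch (-(n : ℂ)) k * poch (1 + 2 * c - a + (n : ℂ)) k * poch c k) /
          ((Nat.factorial k : ℂ) * poch ((1 + 2 * c - a) / 2) k *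
            poch ((2 + 2 * c - a) / 2) k) * (1 / 4 : ℂ) ^ k := by
  set a' : ℂ := 1 + 2 * c - a + n
  have hA := poch_one_sub_mul_sum n a c han
  have hB := poch_one_sub_mul_sum n a' c (by rwa [show a' - n = 1 + 2 * c - a by ring])
  rw [show a' - n - c = 1 - n - (a - n - c) by ring, twistedPochSum_one_sub,
    show (a' - n) / 2 = (1 + 2 * c - a) / 2 by ring,
    show (1 + a' - n) / 2 = (2 + 2 * c - a) / 2 by ring] at hB
  have hrefl : poch (1 + 2 * c - a) n = (-1) ^ n * poch (1 - a') n := by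
    rw [poch_eq_neg_one_pow_mul, show 1 - (1 + 2 * c - a) - n = 1 - a' by ring]
  have hsq : ((-1 : ℂ) ^ n) ^ 2 = 1 := by rw [← pow_mul, mul_comm, pow_mul]; norm_num
  rw [div_mul_eq_mul_div, eq_div_iff h1a, hrefl]
  linear_combination hA - (-1) ^ n * hB - (-1) ^ n * twistedPochSum n c (a - n - c) * hsq
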